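/- arXiv:2605.10727 — 2 statements merged into one kernel-verified Lean document; each statement's English description precedes it below -/
import Mathlib

section
/- Let d ≥ 1, τ > 0, and let k_τ(x,y) = (2πτ²)^{−d/2} exp(−‖x−y‖²/(2τ²)) be the Gaussian kernel on ℝ^d. Let p be any probability measure on ℝ^d and define the smoothed density p̂_τ(x) = ∫ k_τ(x,y) dp(y). Then p̂_τ is everywhere positive and differentiable, all the integrals below are finite, and the original drifting attraction field satisfies V_p^+(x) := (∫ k_τ(x,y)(y − x) dp(y)) / (∫ k_τ(x,y) dp(y)) = τ² · ∇ log p̂_τ(x) for every x ∈ ℝ^d. -/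
/-!
The `x`-gradient of the Gaussian kernel is `τ⁻² k_τ(x,y) (y - x)`. Both `k_τ(x,y)` and
`k_τ(x,y) ‖y - x‖` are bounded uniformly in `x` and `y` (the latter because
`r e^{-r²/(2τ²)} ≤ τ`), so for a finite measure one may differentiate under the integral sign:
`∇p̂(x) = τ⁻² ∫ k_τ(x,y) (y - x) dp(y)`. Since `p̂ > 0`, `∇ log p̂ = ∇p̂ / p̂`, which is `τ⁻² V_p^+`.
-/

open MeasureTheory

/-- The Gaussian kernel with temperature `τ > 0` on `ℝ^d`:
`k_τ(x,y) = (2πτ²)^(−d/2) exp(−‖x−y‖²/(2τ²))`. -/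
noncomputable def gaussKernel (d : ℕ) (τ : ℝ)
    (x y : EuclideanSpace ℝ (Fin d)) : ℝ :=
  (2 * Real.pi * τ ^ 2) ^ (-(d : ℝ) / 2) * Real.exp (-‖x - y‖ ^ 2 / (2 * τ ^ 2))

open InnerProductSpace Filter Topology

section Gradient

variable {E : Type*} [NormedAddCommGroup E] [InnerProductSpace ℝ E] [CompleteSpace E]

theorem HasDerivAt.comp_hasGradientAt {g : ℝ → ℝ} {g' : ℝ} {f : E → ℝ} {f' : E} {x : E}
    (hg : HasDerivAt g g' (f x)) (hf : HasGradientAt f f' x) :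
    HasGradientAt (g ∘ f) (g' • f') x := by
  rw [hasGradientAt_iff_hasFDerivAt, map_smul]
  simpa using hg.comp_hasFDerivAt x hf.hasFDerivAt

theorem HasGradientAt.log {f : E → ℝ} {f' : E} {x : E} (hf : HasGradientAt f f' x)
    (hx : f x ≠ 0) : HasGradientAt (fun x ↦ Real.log (f x)) ((f x)⁻¹ • f') x :=
  (Real.hasDerivAt_log hx).comp_hasGradientAt hf

theorem hasGradientAt_norm_sub_sq (x y : E) :
    HasGradientAt (fun x ↦ ‖x - y‖ ^ 2) ((2 : ℝ) • (x - y)) x := by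
  refine ((hasFDerivAt_id x).sub_const y).norm_sq.congr_fderiv ?_
  ext v
  simp

theorem hasGradientAt_integral_of_dominated_of_gradient_le {α : Type*} [MeasurableSpace α]
    {μ : Measure α} {F : E → α → ℝ} {F' : E → α → E} {x₀ : E} {s : Set E} {bound : α → ℝ}
    (hs : s ∈ 𝓝 x₀) (hF_meas : ∀ᶠ x in 𝓝 x₀, AEStronglyMeasurable (F x) μ)
    (hF_int : Integrable (F x₀) μ) (hF'_meas : AEStronglyMeasurable (F' x₀) μ)
    (h_bound : ∀ᵐ a ∂μ, ∀ x ∈ s, ‖F' x a‖ ≤ bound a) (bound_integrable : Integrable bound μ)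
    (h_diff : ∀ᵐ a ∂μ, ∀ x ∈ s, HasGradientAt (F · a) (F' x a) x) :
    HasGradientAt (fun x ↦ ∫ a, F x a ∂μ) (∫ a, F' x₀ a ∂μ) x₀ := by
  let L := (toDual ℝ E).toContinuousLinearEquiv
  rw [hasGradientAt_iff_hasFDerivAt]
  have := hasFDerivAt_integral_of_dominated_of_fderiv_le (F' := fun x a ↦ L (F' x a)) hs hF_meas
    hF_int (L.continuous.comp_aestronglyMeasurable hF'_meas) (by simpa [L] using h_bound)
    bound_integrable h_diff
  rwa [show ∫ a, L (F' x₀ a) ∂μ = L (∫ a, F' x₀ a ∂μ) from L.integral_comp_comm _] at this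

end Gradient

theorem Real.mul_exp_neg_sq_div_le {τ : ℝ} (hτ : 0 < τ) (r : ℝ) :
    r * Real.exp (-r ^ 2 / (2 * τ ^ 2)) ≤ τ := by
  refine le_of_sq_le_sq ?_ hτ.le
  have hsq : (r * Real.exp (-r ^ 2 / (2 * τ ^ 2))) ^ 2
      = τ ^ 2 * (r ^ 2 / τ ^ 2 * Real.exp (-(r ^ 2 / τ ^ 2))) := by
    rw [mul_pow, ← Real.exp_nat_mul]
    field_simp
    ring_nf
  rw [hsq]
  calc τ ^ 2 * (r ^ 2 / τ ^ 2 * Real.exp (-(r ^ 2 / τ ^ 2)))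
      ≤ τ ^ 2 * Real.exp (-1) := by gcongr; exact Real.mul_exp_neg_le_exp_neg_one _
    _ ≤ τ ^ 2 := mul_le_of_le_one_right (by positivity) (by simp)

namespace gaussKernel

variable {d : ℕ} {τ : ℝ}

theorem nonneg (x y : EuclideanSpace ℝ (Fin d)) : 0 ≤ gaussKernel d τ x y := by
  unfold gaussKernel
  positivity

theorem pos (hτ : 0 < τ) (x y : EuclideanSpace ℝ (Fin d)) : 0 < gaussKernel d τ x y := by
  unfold gaussKernel
  positivity

theorem le_prefactor (x y : EuclideanSpace ℝ (Fin d)) :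
    gaussKernel d τ x y ≤ (2 * Real.pi * τ ^ 2) ^ (-(d : ℝ) / 2) := by
  refine mul_le_of_le_one_right (by positivity) (Real.exp_le_one_iff.mpr ?_)
  exact div_nonpos_of_nonpos_of_nonneg (neg_nonpos.mpr (by positivity)) (by positivity)

theorem mul_norm_sub_le (hτ : 0 < τ) (x y : EuclideanSpace ℝ (Fin d)) :
    gaussKernel d τ x y * ‖y - x‖ ≤ (2 * Real.pi * τ ^ 2) ^ (-(d : ℝ) / 2) * τ := by
  rw [gaussKernel, mul_assoc, norm_sub_rev, mul_comm (Real.exp _)]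
  exact mul_le_mul_of_nonneg_left (Real.mul_exp_neg_sq_div_le hτ _) (by positivity)

@[fun_prop]
theorem continuous_right (x : EuclideanSpace ℝ (Fin d)) : Continuous (gaussKernel d τ x) := by
  unfold gaussKernel
  fun_prop

theorem hasGradientAt_left (x y : EuclideanSpace ℝ (Fin d)) :
    HasGradientAt (gaussKernel d τ · y) (((τ ^ 2)⁻¹ * gaussKernel d τ x y) • (y - x)) x := by
  set C := (2 * Real.pi * τ ^ 2) ^ (-(d : ℝ) / 2)
  have hprofile : HasDerivAt (fun t ↦ C * Real.exp (-t / (2 * τ ^ 2)))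
      (C * (Real.exp (-‖x - y‖ ^ 2 / (2 * τ ^ 2)) * (-1 / (2 * τ ^ 2)))) (‖x - y‖ ^ 2) :=
    ((hasDerivAt_neg (‖x - y‖ ^ 2)).div_const (2 * τ ^ 2)).exp.const_mul C
  have hgrad : ((τ ^ 2)⁻¹ * gaussKernel d τ x y) • (y - x)
      = (C * (Real.exp (-‖x - y‖ ^ 2 / (2 * τ ^ 2)) * (-1 / (2 * τ ^ 2))))
        • (2 : ℝ) • (x - y) := by
    rw [smul_smul, ← neg_sub x y, smul_neg, ← neg_smul]
    congr 1
    simp only [gaussKernel, C]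
    field_simp
  rw [hgrad]
  exact hprofile.comp_hasGradientAt (f := (‖· - y‖ ^ 2)) (hasGradientAt_norm_sub_sq x y)

end gaussKernel

section SmoothedDensity

variable {d : ℕ} {τ : ℝ} (p : Measure (EuclideanSpace ℝ (Fin d)))

theorem integrable_gaussKernel [IsFiniteMeasure p] (x : EuclideanSpace ℝ (Fin d)) :
    Integrable (gaussKernel d τ x) p := by
  refine .of_bound (gaussKernel.continuous_right x).aestronglyMeasurable
    ((2 * Real.pi * τ ^ 2) ^ (-(d : ℝ) / 2)) (ae_of_all _ fun y ↦ ?_)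
  rw [Real.norm_of_nonneg (gaussKernel.nonneg x y)]
  exact gaussKernel.le_prefactor x y

theorem integrable_gaussKernel_smul_sub [IsFiniteMeasure p] (hτ : 0 < τ)
    (x : EuclideanSpace ℝ (Fin d)) : Integrable (fun y ↦ gaussKernel d τ x y • (y - x)) p := by
  refine .of_bound (by fun_prop) ((2 * Real.pi * τ ^ 2) ^ (-(d : ℝ) / 2) * τ)
    (ae_of_all _ fun y ↦ ?_)
  rw [norm_smul, Real.norm_of_nonneg (gaussKernel.nonneg x y)]
  exact gaussKernel.mul_norm_sub_le hτ x y

theorem integral_gaussKernel_pos [IsFiniteMeasure p] [NeZero p] (hτ : 0 < τ)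
    (x : EuclideanSpace ℝ (Fin d)) : 0 < ∫ y, gaussKernel d τ x y ∂p := by
  rw [integral_pos_iff_support_of_nonneg (gaussKernel.nonneg x)
    (integrable_gaussKernel p x), Function.support_eq_univ fun y ↦ (gaussKernel.pos hτ x y).ne']
  simpa using NeZero.ne p

theorem hasGradientAt_integral_gaussKernel [IsFiniteMeasure p] (hτ : 0 < τ)
    (x : EuclideanSpace ℝ (Fin d)) :
    HasGradientAt (fun x ↦ ∫ y, gaussKernel d τ x y ∂p)
      ((τ ^ 2)⁻¹ • ∫ y, gaussKernel d τ x y • (y - x) ∂p) x := by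
  have hbound (x y : EuclideanSpace ℝ (Fin d)) :
      ‖((τ ^ 2)⁻¹ * gaussKernel d τ x y) • (y - x)‖
        ≤ (τ ^ 2)⁻¹ * ((2 * Real.pi * τ ^ 2) ^ (-(d : ℝ) / 2) * τ) := by
    rw [norm_smul, Real.norm_of_nonneg (mul_nonneg (by positivity) (gaussKernel.nonneg x y)),
      mul_assoc]
    exact mul_le_mul_of_nonneg_left (gaussKernel.mul_norm_sub_le hτ x y) (by positivity)
  simp_rw [← integral_smul, smul_smul]
  exact hasGradientAt_integral_of_dominated_of_gradient_le
    (F' := fun x y ↦ ((τ ^ 2)⁻¹ * gaussKernel d τ x y) • (y - x)) univ_mem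
    (.of_forall fun x ↦ (gaussKernel.continuous_right x).aestronglyMeasurable)
    (integrable_gaussKernel p x) (by fun_prop) (ae_of_all _ fun y x _ ↦ hbound x y)
    (integrable_const _) (ae_of_all _ fun y x _ ↦ gaussKernel.hasGradientAt_left x y)

end SmoothedDensity

theorem gaussian_attraction_is_smoothed_score_general
    (d : ℕ) (τ : ℝ) (hτ : 0 < τ)
    (p : Measure (EuclideanSpace ℝ (Fin d))) [IsProbabilityMeasure p] :
    (∀ x, 0 < ∫ y, gaussKernel d τ x y ∂p)
    ∧ Differentiable ℝ (fun x => ∫ y, gaussKernel d τ x y ∂p)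
    ∧ (∀ x, Integrable (fun y => gaussKernel d τ x y) p)
    ∧ (∀ x, Integrable (fun y => gaussKernel d τ x y • (y - x)) p)
    ∧ (∀ x, (∫ y, gaussKernel d τ x y ∂p)⁻¹ • (∫ y, gaussKernel d τ x y • (y - x) ∂p)
        = τ ^ 2 • gradient (fun x' => Real.log (∫ y, gaussKernel d τ x' y ∂p)) x) := by
  have hgrad := hasGradientAt_integral_gaussKernel p hτ
  refine ⟨integral_gaussKernel_pos p hτ, fun x ↦ (hgrad x).differentiableAt,
    integrable_gaussKernel p, integrable_gaussKernel_smul_sub p hτ, fun x ↦ ?_⟩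
  rw [((hgrad x).log (integral_gaussKernel_pos p hτ x).ne').gradient, smul_smul, smul_smul,
    mul_right_comm, mul_inv_cancel₀ (by positivity), one_mul]

/-- for any probability measure `p` on `ℝ^d`, the Gaussian-smoothed density
`p̂_τ(x) = ∫ k_τ(x,y) dp(y)` is everywhere positive and differentiable, the relevant
integrands are integrable, and the original drifting attraction field satisfies
`V_p^+(x) = τ² ∇ log p̂_τ(x)`. -/
theorem gaussian_attraction_is_smoothed_score
    (d : ℕ) (hd : 1 ≤ d) (τ : ℝ) (hτ : 0 < τ)
    (p : Measure (EuclideanSpace ℝ (Fin d))) [IsProbabilityMeasure p] :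
    (∀ x, 0 < ∫ y, gaussKernel d τ x y ∂p)
    ∧ Differentiable ℝ (fun x => ∫ y, gaussKernel d τ x y ∂p)
    ∧ (∀ x, Integrable (fun y => gaussKernel d τ x y) p)
    ∧ (∀ x, Integrable (fun y => gaussKernel d τ x y • (y - x)) p)
    ∧ (∀ x, (∫ y, gaussKernel d τ x y ∂p)⁻¹ • (∫ y, gaussKernel d τ x y • (y - x) ∂p)
        = τ ^ 2 • gradient (fun x' => Real.log (∫ y, gaussKernel d τ x' y ∂p)) x) :=
  gaussian_attraction_is_smoothed_score_general d τ hτ p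
end

section
/- Let d ≥ 1, let p, q : ℝ^d → ℝ be continuously differentiable probability densities with p(z) > 0 and q(z) > 0 for all z, and let V : ℝ^d → ℝ^d be a continuously differentiable vector field with compact support. Then ∫_{ℝ^d} ( ⟨∇ log p(z), V(z)⟩ + div V(z) ) q(z) dz = ∫_{ℝ^d} ⟨∇ log p(z) − ∇ log q(z), V(z)⟩ q(z) dz. Equivalently, the expected trace of the Stein operator A_p V(z) = ∇ log p(z) V(z)ᵀ + ∇V(z) under q equals the expected inner product of the score difference ∇ log p − ∇ log q with V under q. -/
/-! The score of `p` enters both sides in the same way, so the identity reduces to Stein's identity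
for `q`: `∫ (div V) q = -∫ ⟨∇q, V⟩ = -∫ ⟨∇ log q, V⟩ q`. The first equality is coordinatewise
integration by parts, with no boundary terms since `V` has compact support; the second is
`q ∇ log q = ∇q`. When `⟨∇ log p, V⟩ q` is not integrable, both sides are `0` by convention. -/

open MeasureTheory

theorem integral_add_eq_integral_sub_of_integral_eq_neg {α : Type*} [MeasurableSpace α]
    {μ : Measure α} {f g h : α → ℝ} (hg : Integrable g μ) (hh : Integrable h μ)
    (hgh : ∫ x, g x ∂μ = -∫ x, h x ∂μ) :
    ∫ x, (f x + g x) ∂μ = ∫ x, (f x - h x) ∂μ := by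
  by_cases hf : Integrable f μ
  · rw [integral_add hf hg, integral_sub hf hh, hgh, sub_eq_add_neg]
  · rw [integral_undef fun hfg ↦ hf ((integrable_add_iff_integrable_left' hg).mp hfg),
      integral_undef fun hfh ↦ hf
        ((integrable_add_iff_integrable_left' (f := fun x ↦ -h x) hh.neg).mp
          (by simpa only [sub_eq_add_neg] using hfh))]

theorem integral_mul_fderiv_eq_neg_fderiv_mul_of_hasCompactSupport {E : Type*}
    [NormedAddCommGroup E] [NormedSpace ℝ E] [FiniteDimensional ℝ E] [MeasurableSpace E]
    [BorelSpace E] (μ : Measure E) [μ.IsAddHaarMeasure] {f g : E → ℝ}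
    (hf : ContDiff ℝ 1 f) (hg : ContDiff ℝ 1 g) (hgc : HasCompactSupport g) (v : E) :
    ∫ x, f x * fderiv ℝ g x v ∂μ = -∫ x, fderiv ℝ f x v * g x ∂μ := by
  have hf' : Continuous fun x ↦ fderiv ℝ f x v :=
    (hf.continuous_fderiv one_ne_zero).clm_apply continuous_const
  have hg' : Continuous fun x ↦ fderiv ℝ g x v :=
    (hg.continuous_fderiv one_ne_zero).clm_apply continuous_const
  refine integral_mul_fderiv_eq_neg_fderiv_mul_of_integrable ?_ ?_ ?_
    (fun x _ ↦ hf.differentiable one_ne_zero x) (fun x _ ↦ hg.differentiable one_ne_zero x)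
  · exact (hf'.mul hg.continuous).integrable_of_hasCompactSupport hgc.mul_left
  · exact (hf.continuous.mul hg').integrable_of_hasCompactSupport (hgc.fderiv_apply ℝ v).mul_left
  · exact (hf.continuous.mul hg.continuous).integrable_of_hasCompactSupport hgc.mul_left

theorem inner_gradient_log_mul_self {F : Type*} [NormedAddCommGroup F] [InnerProductSpace ℝ F]
    [CompleteSpace F] {q : F → ℝ} {z : F} (hq : DifferentiableAt ℝ q z) (hqz : q z ≠ 0) (v : F) :
    inner ℝ (gradient (fun y ↦ Real.log (q y)) z) v * q z = fderiv ℝ q z v := by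
  rw [gradient, InnerProductSpace.toDual_symm_apply, (hq.hasFDerivAt.log hqz).fderiv,
    smul_apply, smul_eq_mul]
  field_simp

namespace EuclideanSpace

variable {ι : Type*} [Fintype ι]

theorem fderiv_apply_coord {V : EuclideanSpace ℝ ι → EuclideanSpace ℝ ι} {z : EuclideanSpace ℝ ι}
    (hV : DifferentiableAt ℝ V z) (i : ι) (v : EuclideanSpace ℝ ι) :
    fderiv ℝ (fun y ↦ V y i) z v = fderiv ℝ V z v i :=
  congrArg (· v) ((proj i).hasFDerivAt.comp z hV.hasFDerivAt).fderiv

variable [DecidableEq ι]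

noncomputable def divergence (V : EuclideanSpace ℝ ι → EuclideanSpace ℝ ι)
    (z : EuclideanSpace ℝ ι) : ℝ :=
  ∑ i, fderiv ℝ V z (single i 1) i

theorem clm_apply_eq_sum (L : EuclideanSpace ℝ ι →L[ℝ] ℝ) (x : EuclideanSpace ℝ ι) :
    L x = ∑ i, L (single i 1) * x i := by
  conv_lhs => rw [← (basisFun ι ℝ).sum_repr x]
  simp [mul_comm]

variable {V : EuclideanSpace ℝ ι → EuclideanSpace ℝ ι}

theorem _root_.HasCompactSupport.divergence (hVc : HasCompactSupport V) :
    HasCompactSupport (divergence V) :=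
  (hVc.fderiv ℝ).comp_left
    (g := fun L : EuclideanSpace ℝ ι →L[ℝ] EuclideanSpace ℝ ι ↦ ∑ i, L (single i 1) i) (by simp)

theorem _root_.ContDiff.continuous_divergence (hV : ContDiff ℝ 1 V) : Continuous (divergence V) :=
  continuous_finsetSum _ fun i _ ↦ (proj i).continuous.comp
    ((hV.continuous_fderiv one_ne_zero).clm_apply continuous_const)

theorem integral_divergence_mul_eq_neg {q : EuclideanSpace ℝ ι → ℝ} (hV : ContDiff ℝ 1 V)
    (hVc : HasCompactSupport V) (hq : ContDiff ℝ 1 q) :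
    ∫ z, divergence V z * q z = -∫ z, fderiv ℝ q z (V z) := by
  have hVi (i : ι) : ContDiff ℝ 1 fun y ↦ V y i := (proj (𝕜 := ℝ) i).contDiff.comp hV
  have hVic (i : ι) : HasCompactSupport fun y ↦ V y i :=
    hVc.comp_left (g := fun x : EuclideanSpace ℝ ι ↦ x i) rfl
  have hq' (v) : Continuous fun z ↦ fderiv ℝ q z v :=
    (hq.continuous_fderiv one_ne_zero).clm_apply continuous_const
  have hVi' (i : ι) (v) : Continuous fun z ↦ fderiv ℝ (fun y ↦ V y i) z v :=
    ((hVi i).continuous_fderiv one_ne_zero).clm_apply continuous_const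
  calc ∫ z, divergence V z * q z
      = ∫ z, ∑ i, q z * fderiv ℝ (fun y ↦ V y i) z (single i 1) := by
        congr 1 with z
        rw [divergence, Finset.sum_mul]
        refine Finset.sum_congr rfl fun i _ ↦ ?_
        rw [fderiv_apply_coord (hV.differentiable one_ne_zero z), mul_comm]
    _ = ∑ i, ∫ z, q z * fderiv ℝ (fun y ↦ V y i) z (single i 1) :=
        integral_finsetSum _ fun i _ ↦
          (hq.continuous.mul (hVi' i _)).integrable_of_hasCompactSupport
            ((hVic i).fderiv_apply ℝ _).mul_left
    _ = ∑ i, -∫ z, fderiv ℝ q z (single i 1) * V z i :=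
        Finset.sum_congr rfl fun i _ ↦
          integral_mul_fderiv_eq_neg_fderiv_mul_of_hasCompactSupport volume hq (hVi i) (hVic i) _
    _ = -∫ z, ∑ i, fderiv ℝ q z (single i 1) * V z i := by
        rw [integral_finsetSum (f := fun i z ↦ fderiv ℝ q z (single i 1) * V z i) _ fun i _ ↦
          ((hq' _).mul (hVi i).continuous).integrable_of_hasCompactSupport (hVic i).mul_left,
          Finset.sum_neg_distrib]
    _ = -∫ z, fderiv ℝ q z (V z) := by
        simp only [← clm_apply_eq_sum]

end EuclideanSpace

theorem stein_operator_expected_trace_general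
    (d : ℕ)
    (p q : EuclideanSpace ℝ (Fin d) → ℝ)
    (hq : ContDiff ℝ 1 q)
    (hqpos : ∀ z, 0 < q z)
    (V : EuclideanSpace ℝ (Fin d) → EuclideanSpace ℝ (Fin d))
    (hV : ContDiff ℝ 1 V) (hVc : HasCompactSupport V) :
    ∫ z, ((inner ℝ (gradient (fun z' => Real.log (p z')) z) (V z) : ℝ)
        + ∑ i, fderiv ℝ V z (EuclideanSpace.single i 1) i) * q z
      = ∫ z, (inner ℝ (gradient (fun z' => Real.log (p z')) z
          - gradient (fun z' => Real.log (q z')) z) (V z) : ℝ) * q z := by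
  have hscore : (fun z ↦ inner ℝ (gradient (fun z' ↦ Real.log (q z')) z) (V z) * q z)
      = fun z ↦ fderiv ℝ q z (V z) :=
    funext fun z ↦ inner_gradient_log_mul_self (hq.differentiable one_ne_zero z) (hqpos z).ne' _
  simp only [add_mul, inner_sub_left, sub_mul]
  refine integral_add_eq_integral_sub_of_integral_eq_neg
    (hV.continuous_divergence.mul hq.continuous |>.integrable_of_hasCompactSupport
      hVc.divergence.mul_right) ?_ ?_
  · rw [hscore]
    exact ((hq.continuous_fderiv one_ne_zero).clm_apply hV.continuous)
      |>.integrable_of_hasCompactSupport (hVc.mono fun z hz hVz ↦ hz (by simp [hVz]))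
  · rw [hscore]
    exact EuclideanSpace.integral_divergence_mul_eq_neg hV hVc hq

/-- expected trace of the Stein operator: for positive `C¹` probability
densities `p, q` on `ℝ^d` and a `C¹` compactly supported vector field `V`,
`∫ (⟨∇ log p, V⟩ + div V) q = ∫ ⟨∇ log p − ∇ log q, V⟩ q`. -/
theorem stein_operator_expected_trace
    (d : ℕ) (hd : 1 ≤ d)
    (p q : EuclideanSpace ℝ (Fin d) → ℝ)
    (hp : ContDiff ℝ 1 p) (hq : ContDiff ℝ 1 q)
    (hppos : ∀ z, 0 < p z) (hqpos : ∀ z, 0 < q z)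
    (hpint : Integrable p) (hqint : Integrable q)
    (hpnorm : ∫ z, p z = 1) (hqnorm : ∫ z, q z = 1)
    (V : EuclideanSpace ℝ (Fin d) → EuclideanSpace ℝ (Fin d))
    (hV : ContDiff ℝ 1 V) (hVc : HasCompactSupport V) :
    ∫ z, ((inner ℝ (gradient (fun z' => Real.log (p z')) z) (V z) : ℝ)
        + ∑ i, fderiv ℝ V z (EuclideanSpace.single i 1) i) * q z
      = ∫ z, (inner ℝ (gradient (fun z' => Real.log (p z')) z
          - gradient (fun z' => Real.log (q z')) z) (V z) : ℝ) * q z :=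
  stein_operator_expected_trace_general d p q hq hqpos V hV hVc
end
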